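/- arXiv:1009.2732 — 2 statements merged into one kernel-verified Lean document; each statement's English description precedes it below -/
import Mathlib

section
/- With σ₁ and σ₂ as defined, for any a > 0, any t > 0 and any Schwartz function φ on ℝ^d, letting η_a(x) = x/√a, one has σ₁((a t, φ ∘ η_a),(a t, φ ∘ η_a)) = a^{d/2} σ₁((t,φ),(t,φ)) and σ₂((a t, φ ∘ η_a),(a t, φ ∘ η_a)) = a^{d/2} σ₂((t,φ),(t,φ)). -/
open MeasureTheory Real Matrix

/-- The centered Gaussian density on `ℝ^d` with covariance matrix `u • a`. -/
noncomputable def gaussDensity (d : ℕ) (a : Matrix (Fin d) (Fin d) ℝ) (u : ℝ)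
    (x : Fin d → ℝ) : ℝ :=
  (2 * π * u) ^ (-(d : ℝ) / 2) * (a.det) ^ (-(1 : ℝ) / 2) *
    Real.exp (-(1 / (2 * u)) * (x ⬝ᵥ a⁻¹.mulVec x))

/-- `∫∫ φ(y) ψ(z) p_u(z-y) dz dy`, with `p_0` interpreted as the Dirac mass,
so that the value at `u = 0` is `∫ φ ψ`. -/
noncomputable def gaussPairing (d : ℕ) (a : Matrix (Fin d) (Fin d) ℝ) (u : ℝ)
    (φ ψ : (Fin d → ℝ) → ℝ) : ℝ :=
  if u = 0 then ∫ x : Fin d → ℝ, φ x * ψ x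
  else ∫ y : Fin d → ℝ, ∫ z : Fin d → ℝ, φ y * ψ z * gaussDensity d a u (z - y)

/-- `σ₁((s,φ),(t,ψ))`. -/
noncomputable def sigma1 (d : ℕ) (a : Matrix (Fin d) (Fin d) ℝ) (s t : ℝ)
    (φ ψ : (Fin d → ℝ) → ℝ) : ℝ :=
  gaussPairing d a |t - s| φ ψ - gaussPairing d a (t + s) φ ψ

/-- `σ₂((s,φ),(t,ψ))`. -/
noncomputable def sigma2 (d : ℕ) (a : Matrix (Fin d) (Fin d) ℝ) (s t : ℝ)
    (φ ψ : (Fin d → ℝ) → ℝ) : ℝ :=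
  gaussPairing d a (t + s) φ ψ - gaussPairing d a t φ ψ - gaussPairing d a s φ ψ
    + ∫ x : Fin d → ℝ, φ x * ψ x

lemma gaussDensity_scale (d : ℕ) (a : Matrix (Fin d) (Fin d) ℝ) {c u : ℝ}
    (hc : 0 < c) (hu : 0 < u) (w : Fin d → ℝ) :
    gaussDensity d a (c * u) (Real.sqrt c • w)
      = c ^ (-(d : ℝ) / 2) * gaussDensity d a u w := by
  have hs2 : Real.sqrt c * Real.sqrt c = c := Real.mul_self_sqrt hc.le
  unfold gaussDensity
  have h1 : (2 * π * (c * u)) ^ (-(d : ℝ) / 2)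
      = c ^ (-(d : ℝ) / 2) * (2 * π * u) ^ (-(d : ℝ) / 2) := by
    rw [show 2 * π * (c * u) = c * (2 * π * u) by ring,
      Real.mul_rpow hc.le (by positivity)]
  have h2 : (Real.sqrt c • w) ⬝ᵥ a⁻¹.mulVec (Real.sqrt c • w)
      = c * (w ⬝ᵥ a⁻¹.mulVec w) := by
    rw [Matrix.mulVec_smul, smul_dotProduct, dotProduct_smul, smul_eq_mul, smul_eq_mul,
      ← mul_assoc, hs2]
  have h3 : -(1 / (2 * (c * u))) * (c * (w ⬝ᵥ a⁻¹.mulVec w))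
      = -(1 / (2 * u)) * (w ⬝ᵥ a⁻¹.mulVec w) := by
    field_simp
  rw [h1, h2, h3]; ring

lemma sqrt_pow_d (d : ℕ) {c : ℝ} (hc : 0 < c) :
    Real.sqrt c ^ d = c ^ ((d : ℝ) / 2) := by
  rw [Real.sqrt_eq_rpow, ← Real.rpow_natCast (c ^ ((1:ℝ)/2)) d, ← Real.rpow_mul hc.le]
  congr 1; ring

lemma gaussPairing_scale (d : ℕ) (a : Matrix (Fin d) (Fin d) ℝ) {c : ℝ}
    (hc : 0 < c) {u : ℝ} (hu : 0 ≤ u) (φ ψ : (Fin d → ℝ) → ℝ) :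
    gaussPairing d a (c * u)
        (fun x => φ ((Real.sqrt c)⁻¹ • x)) (fun x => ψ ((Real.sqrt c)⁻¹ • x))
      = c ^ ((d : ℝ) / 2) * gaussPairing d a u φ ψ := by
  set s := Real.sqrt c with hs
  have hs0 : 0 < s := Real.sqrt_pos.2 hc
  have hpow : (s ^ Module.finrank ℝ (Fin d → ℝ) : ℝ) = c ^ ((d : ℝ) / 2) := by
    simp only [Module.finrank_fintype_fun_eq_card, Fintype.card_fin]
    exact sqrt_pow_d d hc
  have hone : c ^ ((d : ℝ) / 2) * c ^ (-(d : ℝ) / 2) = 1 := by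
    rw [← Real.rpow_add hc, show (d:ℝ)/2 + -(d:ℝ)/2 = 0 by ring, Real.rpow_zero]
  rcases eq_or_lt_of_le hu with rfl | hu'
  · simp only [gaussPairing, mul_zero, if_pos rfl]
    have := MeasureTheory.Measure.integral_comp_inv_smul_of_nonneg (volume : Measure (Fin d → ℝ))
      (fun x => φ x * ψ x) hs0.le
    rw [this, hpow, smul_eq_mul]; simp
  · have hcu : c * u ≠ 0 := by positivity
    rw [gaussPairing, if_neg hcu, gaussPairing, if_neg hu'.ne']
    have inner_eq : ∀ y' : Fin d → ℝ,
        (∫ z : Fin d → ℝ, φ y' * ψ (s⁻¹ • z) * gaussDensity d a (c * u) (z - s • y'))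
          = ∫ z : Fin d → ℝ, φ y' * ψ z * gaussDensity d a u (z - y') := by
      intro y'
      have h := MeasureTheory.Measure.integral_comp_smul_of_nonneg
        (volume : Measure (Fin d → ℝ))
        (fun z => φ y' * ψ (s⁻¹ • z) * gaussDensity d a (c * u) (z - s • y')) s
        (hR := hs0.le)
      have h2 : (∫ z : Fin d → ℝ, φ y' * ψ (s⁻¹ • z) * gaussDensity d a (c * u) (z - s • y'))
          = s ^ Module.finrank ℝ (Fin d → ℝ) •
            ∫ z : Fin d → ℝ, φ y' * ψ (s⁻¹ • (s • z)) *
              gaussDensity d a (c * u) (s • z - s • y') := by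
        rw [h, smul_smul, mul_inv_cancel₀ (pow_ne_zero _ hs0.ne'), one_smul]
      rw [h2]
      have hpt : ∀ z : Fin d → ℝ,
          φ y' * ψ (s⁻¹ • (s • z)) * gaussDensity d a (c * u) (s • z - s • y')
            = c ^ (-(d : ℝ) / 2) * (φ y' * ψ z * gaussDensity d a u (z - y')) := by
        intro z
        rw [inv_smul_smul₀ hs0.ne', ← smul_sub, hs, gaussDensity_scale d a hc hu']
        ring
      simp_rw [hpt]
      rw [integral_const_mul, hpow, smul_eq_mul, ← mul_assoc, hone, one_mul]
    have h := MeasureTheory.Measure.integral_comp_smul_of_nonneg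
      (volume : Measure (Fin d → ℝ))
      (fun y => ∫ z : Fin d → ℝ, φ (s⁻¹ • y) * ψ (s⁻¹ • z) *
        gaussDensity d a (c * u) (z - y)) s (hR := hs0.le)
    have h2 : (∫ y : Fin d → ℝ, ∫ z : Fin d → ℝ, φ (s⁻¹ • y) * ψ (s⁻¹ • z) *
          gaussDensity d a (c * u) (z - y))
        = s ^ Module.finrank ℝ (Fin d → ℝ) •
          ∫ y : Fin d → ℝ, ∫ z : Fin d → ℝ, φ (s⁻¹ • (s • y)) * ψ (s⁻¹ • z) *
            gaussDensity d a (c * u) (z - s • y) := by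
      rw [h, smul_smul, mul_inv_cancel₀ (pow_ne_zero _ hs0.ne'), one_smul]
    rw [h2, hpow, smul_eq_mul]
    congr 1
    refine integral_congr_ae (Filter.Eventually.of_forall fun y => ?_)
    simp only [inv_smul_smul₀ hs0.ne']
    exact inner_eq y

/-- Self-similarity of the covariance:  with `η_c(x) = x/√c`,
`σᵢ((c t, φ∘η_c),(c t, φ∘η_c)) = c^{d/2} σᵢ((t,φ),(t,φ))` for `i = 1, 2`. -/
theorem sigma_self_similar (d : ℕ) (a : Matrix (Fin d) (Fin d) ℝ)
    (ha : a.PosDef) (haSymm : a.IsSymm)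
    (c t : ℝ) (hc : 0 < c) (ht : 0 < t) (φ : SchwartzMap (Fin d → ℝ) ℝ) :
    sigma1 d a (c * t) (c * t)
        (fun x => φ ((Real.sqrt c)⁻¹ • x)) (fun x => φ ((Real.sqrt c)⁻¹ • x))
      = c ^ ((d : ℝ) / 2) * sigma1 d a t t ⇑φ ⇑φ ∧
    sigma2 d a (c * t) (c * t)
        (fun x => φ ((Real.sqrt c)⁻¹ • x)) (fun x => φ ((Real.sqrt c)⁻¹ • x))
      = c ^ ((d : ℝ) / 2) * sigma2 d a t t ⇑φ ⇑φ := by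
  have hI : (∫ x : Fin d → ℝ, φ ((Real.sqrt c)⁻¹ • x) * φ ((Real.sqrt c)⁻¹ • x))
      = c ^ ((d : ℝ) / 2) * ∫ x : Fin d → ℝ, φ x * φ x := by
    have h := gaussPairing_scale d a hc le_rfl ⇑φ ⇑φ
    simpa [gaussPairing, mul_zero] using h
  constructor
  · unfold sigma1
    rw [show |c * t - c * t| = c * 0 by simp, show c * t + c * t = c * (t + t) by ring,
      show |t - t| = (0 : ℝ) by simp,
      gaussPairing_scale d a hc le_rfl ⇑φ ⇑φ,
      gaussPairing_scale d a hc (by linarith : (0:ℝ) ≤ t + t) ⇑φ ⇑φ]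
    ring
  · unfold sigma2
    rw [show c * t + c * t = c * (t + t) by ring,
      gaussPairing_scale d a hc (by linarith : (0:ℝ) ≤ t + t) ⇑φ ⇑φ,
      gaussPairing_scale d a hc ht.le ⇑φ ⇑φ, hI]
    ring
end

section
/- Let φ : ℝ^d → ℝ be C¹ with |∇φ(x)| ≤ c_N (1+|x|)^{−N} for all x, for some N > d + k − 1 (k ≥ 1 an integer). Let Y, Z be ℤ^d-valued random variables with E|Z − Y|^k < ∞, and suppose Y and Z − Y are independent. Then Σ_{m∈ℤ^d} E|φ((Y+m)/√n) − φ((Z+m)/√n)|^k ≤ C n^{d/2} n^{−k/2} E|Z − Y|^k for a constant C depending on c_N, N, d, k only. -/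
open MeasureTheory ProbabilityTheory Real

-- MVT telescoping step
lemma mvt_step {q c x : ℝ} (hq : 1 < q) (hc : 0 < c) (hx : 0 ≤ x) :
    (q - 1) * c * (1 + (x + 1) * c) ^ (-q) ≤ (1 + x * c) ^ (1 - q) - (1 + (x + 1) * c) ^ (1 - q) := by
  set f : ℝ → ℝ := fun y => -((1 + y * c) ^ (1 - q)) with hf
  have hpos : ∀ y : ℝ, 0 ≤ y → 0 < 1 + y * c := by
    intro y hy; nlinarith
  have hderiv : ∀ y : ℝ, 0 ≤ y → HasDerivAt f ((q - 1) * c * (1 + y * c) ^ (-q)) y := by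
    intro y hy
    have h1 : HasDerivAt (fun y : ℝ => 1 + y * c) c y := by
      simpa using ((hasDerivAt_id y).mul_const c).const_add 1
    have h2 : HasDerivAt (fun t : ℝ => t ^ (1 - q)) ((1 - q) * (1 + y * c) ^ (1 - q - 1)) (1 + y * c) :=
      Real.hasDerivAt_rpow_const (Or.inl (ne_of_gt (hpos y hy)))
    have := (h2.comp y h1).neg
    refine this.congr_deriv ?_
    have : 1 - q - 1 = -q := by ring
    rw [this]; ring
  have hmvt := exists_hasDerivAt_eq_slope f (fun y => (q - 1) * c * (1 + y * c) ^ (-q))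
    (by linarith : x < x + 1)
    (by
      have : ContinuousOn f (Set.Icc x (x+1)) := by
        apply ContinuousOn.neg
        apply ContinuousOn.rpow_const
        · fun_prop
        · intro y hy; left; exact ne_of_gt (hpos y (le_trans hx hy.1))
      exact this)
    (fun y hy => hderiv y (le_trans hx hy.1.le))
  obtain ⟨ξ, hξ, heq⟩ := hmvt
  have h1 : f (x + 1) - f x = (1 + x * c) ^ (1 - q) - (1 + (x + 1) * c) ^ (1 - q) := by
    simp [hf]; ring
  have h2 : (1 + (x + 1) * c) ^ (-q) ≤ (1 + ξ * c) ^ (-q) := by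
    apply Real.rpow_le_rpow_of_nonpos (hpos ξ (le_trans hx hξ.1.le))
    · nlinarith [hξ.2]
    · linarith
  have h3 : (q - 1) * c * (1 + ξ * c) ^ (-q) = f (x + 1) - f x := by
    rw [heq]; field_simp; ring
  nlinarith [mul_le_mul_of_nonneg_left h2 (by nlinarith : (0:ℝ) ≤ (q-1)*c)]

lemma nat_sum_bound {q c : ℝ} (hq : 1 < q) (hc : 0 < c) (G : Finset ℕ) :
    ∑ L ∈ G, (1 + (L : ℝ) * c) ^ (-q) ≤ 1 + 1 / ((q - 1) * c) := by
  have hqc : (0:ℝ) < (q - 1) * c := by nlinarith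
  set a : ℕ → ℝ := fun L => (1 + (L : ℝ) * c) ^ (-q) with ha
  have hpos : ∀ L : ℕ, (0:ℝ) < 1 + (L:ℝ) * c := by
    intro L; positivity
  have hanon : ∀ L : ℕ, 0 ≤ a L := fun L => Real.rpow_nonneg (hpos L).le _
  obtain ⟨M, hM⟩ : ∃ M, G ⊆ Finset.range M := ⟨(G.sup id) + 1, fun x hx =>
    Finset.mem_range.mpr (Nat.lt_succ_of_le (Finset.le_sup (f := id) hx))⟩
  have h1 : ∑ L ∈ G, a L ≤ ∑ L ∈ Finset.range M, a L :=
    Finset.sum_le_sum_of_subset_of_nonneg hM (fun i _ _ => hanon i)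
  refine h1.trans ?_
  cases' M with M'
  · simp only [Finset.range_zero, Finset.sum_empty]
    have : (0:ℝ) ≤ 1 / ((q-1)*c) := by positivity
    linarith
  rw [Finset.sum_range_succ']
  have ha0 : a 0 = 1 := by simp [ha]
  set g : ℕ → ℝ := fun i => (1 + (i:ℝ) * c) ^ (1 - q) with hg
  have hstep : ∀ i : ℕ, a (i + 1) ≤ (g i - g (i + 1)) / ((q - 1) * c) := by
    intro i
    rw [le_div_iff₀ hqc]
    have := mvt_step hq hc (Nat.cast_nonneg i : (0:ℝ) ≤ i)
    simp only [ha, hg]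
    push_cast
    nlinarith [this]
  have h2 : ∑ i ∈ Finset.range M', a (i + 1) ≤ ∑ i ∈ Finset.range M', (g i - g (i + 1)) / ((q - 1) * c) :=
    Finset.sum_le_sum (fun i _ => hstep i)
  have h3 : ∑ i ∈ Finset.range M', (g i - g (i + 1)) / ((q - 1) * c)
      = (g 0 - g M') / ((q - 1) * c) := by
    rw [← Finset.sum_div, Finset.sum_range_sub']
  have hg0 : g 0 = 1 := by simp [hg]
  have hgM : 0 ≤ g M' := Real.rpow_nonneg (hpos M').le _
  have h4 : (g 0 - g M') / ((q - 1) * c) ≤ 1 / ((q - 1) * c) := by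
    gcongr; linarith
  linarith [h2, h3, h4]

lemma int_sum_bound {q c : ℝ} (hq : 1 < q) (hc : 0 < c) (v : ℝ) (F : Finset ℤ) :
    ∑ j ∈ F, (1 + |v + (j : ℝ)| * c) ^ (-q) ≤ 2 * (1 + 1 / ((q - 1) * c)) := by
  set a : ℕ → ℝ := fun L => (1 + (L : ℝ) * c) ^ (-q) with ha
  have hpos : ∀ L : ℕ, (0:ℝ) < 1 + (L:ℝ) * c := fun L => by positivity
  have hanon : ∀ L : ℕ, 0 ≤ a L := fun L => Real.rpow_nonneg (hpos L).le _
  set Lf : ℤ → ℕ := fun j => ⌊|v + (j:ℝ)|⌋₊ with hLf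
  have hterm : ∀ j ∈ F, (1 + |v + (j : ℝ)| * c) ^ (-q) ≤ a (Lf j) := by
    intro j _
    apply Real.rpow_le_rpow_of_nonpos (hpos (Lf j))
    · have := Nat.floor_le (abs_nonneg (v + (j:ℝ)))
      nlinarith
    · linarith
  have h1 : ∑ j ∈ F, (1 + |v + (j : ℝ)| * c) ^ (-q) ≤ ∑ j ∈ F, a (Lf j) :=
    Finset.sum_le_sum hterm
  refine h1.trans ?_
  rw [Finset.sum_comp]
  have hcard : ∀ L ∈ F.image Lf, ((F.filter (fun j => Lf j = L)).card : ℝ) ≤ 2 := by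
    intro L _
    have hsub : F.filter (fun j => Lf j = L) ⊆ {⌈(L:ℝ) - v⌉, ⌊-(L:ℝ) - v⌋} := by
      intro j hj
      obtain ⟨-, hj2⟩ := Finset.mem_filter.mp hj
      have hfl : (L:ℝ) ≤ |v + (j:ℝ)| ∧ |v + (j:ℝ)| < L + 1 := by
        rw [hLf] at hj2
        constructor
        · exact_mod_cast (Nat.floor_eq_iff (abs_nonneg _)).mp hj2 |>.1
        · exact_mod_cast (Nat.floor_eq_iff (abs_nonneg _)).mp hj2 |>.2
      rcases abs_cases (v + (j:ℝ)) with ⟨he, hsgn⟩ | ⟨he, hsgn⟩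
      · have h1' : (L:ℝ) - v ≤ j := by rw [he] at hfl; linarith [hfl.1]
        have h2' : (j:ℝ) < (L:ℝ) - v + 1 := by rw [he] at hfl; linarith [hfl.2]
        have : ⌈(L:ℝ) - v⌉ = j := by
          rw [Int.ceil_eq_iff]
          constructor <;> [push_cast; skip] <;> [linarith; exact h1']
        simp [this.symm]
      · have h1' : (j:ℝ) ≤ -(L:ℝ) - v := by rw [he] at hfl; linarith [hfl.1]
        have h2' : (-(L:ℝ) - v) < j + 1 := by rw [he] at hfl; push_cast; linarith [hfl.2]
        have : ⌊-(L:ℝ) - v⌋ = j := by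
          rw [Int.floor_eq_iff]
          constructor
          · exact_mod_cast h1'
          · push_cast; linarith
        simp [this.symm]
    calc ((F.filter (fun j => Lf j = L)).card : ℝ) ≤ (({⌈(L:ℝ) - v⌉, ⌊-(L:ℝ) - v⌋} : Finset ℤ).card : ℝ) := by
          exact_mod_cast Nat.cast_le.mpr (Finset.card_le_card hsub)
      _ ≤ 2 := by
          have := Finset.card_insert_le (⌈(L:ℝ) - v⌉) ({⌊-(L:ℝ) - v⌋} : Finset ℤ)
          simp at this ⊢
          exact_mod_cast this
  have h2 : ∑ L ∈ F.image Lf, ((F.filter (fun j => Lf j = L)).card) • a L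
      ≤ ∑ L ∈ F.image Lf, 2 * a L := by
    apply Finset.sum_le_sum
    intro L hL
    rw [nsmul_eq_mul]
    exact mul_le_mul_of_nonneg_right (hcard L hL) (hanon L)
  refine h2.trans ?_
  rw [← Finset.mul_sum]
  have := nat_sum_bound hq hc (F.image Lf)
  nlinarith [this]

lemma pi_sum_bound {d : ℕ} (hd : 1 ≤ d) {p c : ℝ} (hp : (d:ℝ) < p) (hc : 0 < c)
    (v : Fin d → ℝ) (F : Finset (Fin d → ℤ)) :
    ∑ m ∈ F, (1 + ‖(fun i => v i + (m i : ℝ))‖ * c) ^ (-p)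
      ≤ (2 * (1 + 1 / ((p / d - 1) * c))) ^ d := by
  have hd0 : (0:ℝ) < d := by exact_mod_cast hd
  set q : ℝ := p / d with hqdef
  have hq : 1 < q := (one_lt_div hd0).mpr hp
  set b : Fin d → ℤ → ℝ := fun i j => (1 + |v i + (j : ℝ)| * c) ^ (-q) with hb
  have hbnon : ∀ i j, 0 ≤ b i j := fun i j => Real.rpow_nonneg (by positivity) _
  have hpoint : ∀ m : Fin d → ℤ,
      (1 + ‖(fun i => v i + (m i : ℝ))‖ * c) ^ (-p) ≤ ∏ i, b i (m i) := by
    intro m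
    set x : Fin d → ℝ := fun i => v i + (m i : ℝ) with hx
    have hxn : 0 ≤ ‖x‖ := norm_nonneg _
    have hprodpos : ∀ i, (0:ℝ) < 1 + |x i| * c := fun i => by positivity
    have hprod_le : ∏ i, (1 + |x i| * c) ≤ (1 + ‖x‖ * c) ^ d := by
      have h1 : ∏ i : Fin d, (1 + |x i| * c) ≤ ∏ _i : Fin d, (1 + ‖x‖ * c) := by
        apply Finset.prod_le_prod
        · intro i _; positivity
        · intro i _
          have : |x i| ≤ ‖x‖ := by
            simpa [Real.norm_eq_abs] using norm_le_pi_norm x i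
          nlinarith
      simpa using h1
    have key : (1 + ‖x‖ * c) ^ (-p) = ((1 + ‖x‖ * c) ^ (d:ℕ)) ^ (-q) := by
      rw [← Real.rpow_natCast (1 + ‖x‖ * c) d, ← Real.rpow_mul (by positivity)]
      congr 1
      rw [hqdef]
      field_simp
    rw [key]
    calc ((1 + ‖x‖ * c) ^ (d:ℕ)) ^ (-q) ≤ (∏ i, (1 + |x i| * c)) ^ (-q) := by
          apply Real.rpow_le_rpow_of_nonpos (Finset.prod_pos (fun i _ => hprodpos i)) hprod_le
            (by linarith)
      _ = ∏ i, b i (m i) := by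
          rw [← Real.finset_prod_rpow _ _ (fun i _ => (hprodpos i).le)]
  have h1 : ∑ m ∈ F, (1 + ‖(fun i => v i + (m i : ℝ))‖ * c) ^ (-p)
      ≤ ∑ m ∈ F, ∏ i, b i (m i) := Finset.sum_le_sum (fun m _ => hpoint m)
  refine h1.trans ?_
  have hsub : F ⊆ Fintype.piFinset (fun i => F.image (fun m => m i)) := by
    intro m hm
    rw [Fintype.mem_piFinset]
    intro i
    exact Finset.mem_image_of_mem _ hm
  have h2 : ∑ m ∈ F, ∏ i, b i (m i)
      ≤ ∑ m ∈ Fintype.piFinset (fun i => F.image (fun m => m i)), ∏ i, b i (m i) :=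
    Finset.sum_le_sum_of_subset_of_nonneg hsub
      (fun m _ _ => Finset.prod_nonneg (fun i _ => hbnon i (m i)))
  refine h2.trans ?_
  rw [← Finset.prod_univ_sum]
  calc ∏ i, ∑ j ∈ F.image (fun m => m i), b i j
      ≤ ∏ i : Fin d, (2 * (1 + 1 / ((q - 1) * c))) := by
        apply Finset.prod_le_prod
        · intro i _; exact Finset.sum_nonneg (fun j _ => hbnon i j)
        · intro i _; exact int_sum_bound hq hc (v i) _
    _ = (2 * (1 + 1 / ((p / d - 1) * c))) ^ d := by
        rw [Finset.prod_const]; simp [hqdef]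

/-- cumulative number of steps before coordinate `i` -/
def cumw {d : ℕ} (w : Fin d → ℤ) (i : Fin d) : ℕ :=
  ∑ i' ∈ Finset.univ.filter (fun i' => i' < i), (w i').natAbs

/-- staircase lattice path from `y` towards `y + w` -/
def pathP {d : ℕ} (y w : Fin d → ℤ) (t : ℕ) : Fin d → ℤ :=
  fun i => y i + (w i).sign * ((min (w i).natAbs (t - cumw w i) : ℕ) : ℤ)

lemma pathP_zero {d : ℕ} (y w : Fin d → ℤ) : pathP y w 0 = y := by
  funext i; simp [pathP]

lemma pathP_last {d : ℕ} (y w : Fin d → ℤ) :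
    pathP y w (∑ i, (w i).natAbs) = fun i => y i + w i := by
  funext i
  have hle : cumw w i + (w i).natAbs ≤ ∑ i', (w i').natAbs := by
    have : (Finset.univ.filter (fun i' => i' < i)) ∪ {i} ⊆ Finset.univ := by
      intro x _; exact Finset.mem_univ x
    have hdisj : i ∉ Finset.univ.filter (fun i' => i' < i) := by simp
    calc cumw w i + (w i).natAbs
        = ∑ i' ∈ insert i (Finset.univ.filter (fun i' => i' < i)), (w i').natAbs := by
          rw [Finset.sum_insert hdisj, cumw]; ring
      _ ≤ ∑ i', (w i').natAbs :=
          Finset.sum_le_sum_of_subset (fun x _ => Finset.mem_univ x)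
  have hmin : min (w i).natAbs (∑ i', (w i').natAbs - cumw w i) = (w i).natAbs := by omega
  simp only [pathP, hmin]
  rw [Int.sign_mul_natAbs]

lemma pathP_step {d : ℕ} (y w : Fin d → ℤ) (t : ℕ) (i : Fin d) :
    (pathP y w (t + 1) i - pathP y w t i).natAbs ≤ 1 := by
  simp only [pathP]
  have h1 : min (w i).natAbs (t - cumw w i) ≤ min (w i).natAbs (t + 1 - cumw w i) := by omega
  have h2 : min (w i).natAbs (t + 1 - cumw w i) ≤ min (w i).natAbs (t - cumw w i) + 1 := by omega
  have hsign : (w i).sign.natAbs ≤ 1 := by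
    rcases lt_trichotomy (w i) 0 with h | h | h
    · simp [Int.sign_eq_neg_one_of_neg h]
    · simp [h]
    · simp [Int.sign_eq_one_of_pos h]
  have : y i + (w i).sign * ((min (w i).natAbs (t + 1 - cumw w i) : ℕ) : ℤ)
      - (y i + (w i).sign * ((min (w i).natAbs (t - cumw w i) : ℕ) : ℤ))
      = (w i).sign * (((min (w i).natAbs (t + 1 - cumw w i) : ℕ) : ℤ)
          - ((min (w i).natAbs (t - cumw w i) : ℕ) : ℤ)) := by ring
  rw [this, Int.natAbs_mul]
  have hd : (((min (w i).natAbs (t + 1 - cumw w i) : ℕ) : ℤ)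
      - ((min (w i).natAbs (t - cumw w i) : ℕ) : ℤ)).natAbs ≤ 1 := by omega
  calc (w i).sign.natAbs * _ ≤ 1 * 1 := Nat.mul_le_mul hsign hd
    _ = 1 := by norm_num

lemma pathP_add {d : ℕ} (y w m : Fin d → ℤ) (t : ℕ) :
    pathP (fun i => y i + m i) w t = fun i => pathP y w t i + m i := by
  funext i; simp [pathP]; ring

lemma step_bound {d : ℕ} {N cN : ℝ} (hN : 0 ≤ N) (hcN : 0 ≤ cN)
    {φ : (Fin d → ℝ) → ℝ} (hφ : ContDiff ℝ 1 φ)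
    (hgrad : ∀ x, ‖fderiv ℝ φ x‖ ≤ cN * (1 + ‖x‖) ^ (-N))
    {a b : Fin d → ℝ} (hab : ‖b - a‖ ≤ 1) :
    |φ b - φ a| ≤ cN * 2 ^ N * (1 + ‖a‖) ^ (-N) * ‖b - a‖ := by
  have hdiff : ∀ x ∈ segment ℝ a b, DifferentiableAt ℝ φ x := fun x _ =>
    (hφ.differentiable one_ne_zero).differentiableAt
  have hbound : ∀ x ∈ segment ℝ a b, ‖fderiv ℝ φ x‖ ≤ cN * 2 ^ N * (1 + ‖a‖) ^ (-N) := by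
    intro x hx
    have hna : (0:ℝ) ≤ ‖a‖ := norm_nonneg _
    have hnx : (0:ℝ) ≤ ‖x‖ := norm_nonneg _
    have hA : (0:ℝ) < 1 + ‖a‖ := by linarith
    have hxa : ‖x - a‖ ≤ 1 := by
      rw [segment_eq_image'] at hx
      obtain ⟨θ, hθ, rfl⟩ := hx
      rw [add_sub_cancel_left, norm_smul, Real.norm_eq_abs, abs_of_nonneg hθ.1]
      calc θ * ‖b - a‖ ≤ 1 * 1 :=
        mul_le_mul hθ.2 hab (norm_nonneg _) zero_le_one
      _ = 1 := by norm_num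
    have h2 : (1 + ‖a‖) / 2 ≤ 1 + ‖x‖ := by
      have : ‖a‖ ≤ ‖x‖ + ‖x - a‖ := by
        calc ‖a‖ = ‖x - (x - a)‖ := by congr 1; abel
          _ ≤ ‖x‖ + ‖x - a‖ := norm_sub_le _ _
      linarith
    have h3 : (1 + ‖x‖) ^ (-N) ≤ ((1 + ‖a‖) / 2) ^ (-N) :=
      Real.rpow_le_rpow_of_nonpos (by linarith) h2 (by linarith)
    have h4 : ((1 + ‖a‖) / 2) ^ (-N) = 2 ^ N * (1 + ‖a‖) ^ (-N) := by
      rw [Real.div_rpow hA.le (by norm_num)]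
      rw [show ((2:ℝ) ^ (-N)) = ((2:ℝ) ^ N)⁻¹ from Real.rpow_neg (by norm_num) N]
      field_simp
    calc ‖fderiv ℝ φ x‖ ≤ cN * (1 + ‖x‖) ^ (-N) := hgrad x
      _ ≤ cN * (2 ^ N * (1 + ‖a‖) ^ (-N)) := by
          rw [← h4]; exact mul_le_mul_of_nonneg_left h3 hcN
      _ = cN * 2 ^ N * (1 + ‖a‖) ^ (-N) := by ring
  have := (convex_segment a b).norm_image_sub_le_of_norm_fderiv_le hdiff hbound
    (left_mem_segment ℝ a b) (right_mem_segment ℝ a b)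
  simpa [Real.norm_eq_abs] using this

lemma norm_div_sqrt {d : ℕ} (x : Fin d → ℝ) {s : ℝ} (hs : 0 < s) :
    ‖(fun i => x i / s)‖ = ‖x‖ * (1 / s) := by
  have : (fun i => x i / s) = s⁻¹ • x := by
    funext i; simp [div_eq_inv_mul]
  rw [this, norm_smul, Real.norm_eq_abs, abs_of_pos (inv_pos.mpr hs)]
  ring

lemma pi_sum_bound_n {d : ℕ} (hd : 1 ≤ d) {p : ℝ} (hp : (d:ℝ) < p) {n : ℕ} (hn : 1 ≤ n)
    (v : Fin d → ℝ) (F : Finset (Fin d → ℤ)) :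
    ∑ m ∈ F, (1 + ‖(fun i => v i + (m i : ℝ))‖ * (1 / Real.sqrt n)) ^ (-p)
      ≤ (2 * (1 + 1 / (p / d - 1))) ^ d * Real.sqrt n ^ d := by
  have hd0 : (0:ℝ) < d := by exact_mod_cast hd
  have hq : 1 < p / d := (one_lt_div hd0).mpr hp
  have hsn : (1:ℝ) ≤ Real.sqrt n := by
    rw [show (1:ℝ) = Real.sqrt 1 from (Real.sqrt_one).symm]
    exact Real.sqrt_le_sqrt (by exact_mod_cast hn)
  have hsn0 : (0:ℝ) < Real.sqrt n := by linarith
  have hc : (0:ℝ) < 1 / Real.sqrt n := by positivity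
  refine (pi_sum_bound hd hp hc v F).trans ?_
  have hfac : 2 * (1 + 1 / ((p / d - 1) * (1 / Real.sqrt n)))
      ≤ 2 * (1 + 1 / (p / d - 1)) * Real.sqrt n := by
    have h1 : 1 / ((p / d - 1) * (1 / Real.sqrt n)) = Real.sqrt n / (p / d - 1) := by
      field_simp
    rw [h1]
    have h2 : Real.sqrt n / (p / d - 1) = (1 / (p / d - 1)) * Real.sqrt n := by ring
    rw [h2]
    have hq1 : (0:ℝ) ≤ 1 / (p / d - 1) := by
      apply div_nonneg zero_le_one; linarith
    nlinarith [mul_le_mul_of_nonneg_left hsn hq1]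
  calc (2 * (1 + 1 / ((p / d - 1) * (1 / Real.sqrt n)))) ^ d
      ≤ (2 * (1 + 1 / (p / d - 1)) * Real.sqrt n) ^ d := by
        apply pow_le_pow_left₀ ?_ hfac
        have hq1 : (0:ℝ) ≤ 1 / ((p / d - 1) * (1 / Real.sqrt n)) := by
          apply div_nonneg zero_le_one
          apply mul_nonneg (by linarith) hc.le
        nlinarith
    _ = (2 * (1 + 1 / (p / d - 1))) ^ d * Real.sqrt n ^ d := mul_pow _ _ _

lemma key_pointwise {d k : ℕ} (hd : 1 ≤ d) (hk : 1 ≤ k) {N cN : ℝ}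
    (hN : (d : ℝ) + k - 1 < N) (hcN : 0 ≤ cN)
    {φ : (Fin d → ℝ) → ℝ} (hφ : ContDiff ℝ 1 φ)
    (hgrad : ∀ x, ‖fderiv ℝ φ x‖ ≤ cN * (1 + ‖x‖) ^ (-N))
    {n : ℕ} (hn : 1 ≤ n) (y z : Fin d → ℤ) (F : Finset (Fin d → ℤ)) :
    ∑ m ∈ F, |φ (fun i => ((y i + m i : ℤ) : ℝ) / Real.sqrt n)
        - φ (fun i => ((z i + m i : ℤ) : ℝ) / Real.sqrt n)| ^ k
      ≤ ((d:ℝ) ^ k * (cN * 2 ^ N) ^ k * (2 * (1 + 1 / (N * k / d - 1))) ^ d)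
        * Real.sqrt n ^ d * (1 / Real.sqrt n) ^ k
        * ‖(fun i => ((z i - y i : ℤ) : ℝ))‖ ^ k := by
  have hd' : (1:ℝ) ≤ d := by exact_mod_cast hd
  have hk' : (1:ℝ) ≤ k := by exact_mod_cast hk
  have hN0 : 0 ≤ N := by linarith
  have hNd : (d:ℝ) < N := by linarith
  have hNk : (d:ℝ) < N * k := by nlinarith
  have hsn : (1:ℝ) ≤ Real.sqrt n := by
    rw [show (1:ℝ) = Real.sqrt 1 from (Real.sqrt_one).symm]
    exact Real.sqrt_le_sqrt (by exact_mod_cast hn)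
  have hsn0 : (0:ℝ) < Real.sqrt n := by linarith
  set w : Fin d → ℤ := fun i => z i - y i with hw
  set M : ℕ := ∑ i, (w i).natAbs with hM
  set Q : ℕ → (Fin d → ℤ) := pathP y w with hQ
  set wr : Fin d → ℝ := fun i => ((z i - y i : ℤ) : ℝ) with hwr
  have hwrn : 0 ≤ ‖wr‖ := norm_nonneg _
  -- single step bound
  have hstep : ∀ (t : ℕ) (m : Fin d → ℤ),
      |φ (fun i => ((Q t i + m i : ℤ) : ℝ) / Real.sqrt n)
        - φ (fun i => ((Q (t+1) i + m i : ℤ) : ℝ) / Real.sqrt n)|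
      ≤ cN * 2 ^ N * (1 / Real.sqrt n)
        * (1 + ‖(fun i => ((Q t i : ℤ) : ℝ) + (m i : ℝ))‖ * (1 / Real.sqrt n)) ^ (-N) := by
    intro t m
    set a : Fin d → ℝ := fun i => ((Q t i + m i : ℤ) : ℝ) / Real.sqrt n with ha
    set b : Fin d → ℝ := fun i => ((Q (t+1) i + m i : ℤ) : ℝ) / Real.sqrt n with hb2
    have hba : ‖b - a‖ ≤ 1 / Real.sqrt n := by
      have : ∀ i, ‖(b - a) i‖ ≤ 1 / Real.sqrt n := by
        intro i
        have hstep1 := pathP_step y w t i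
        have : |((Q (t+1) i : ℤ) : ℝ) - ((Q t i : ℤ) : ℝ)| ≤ 1 := by
          rw [← Int.cast_sub, ← Int.cast_abs]
          have : |Q (t+1) i - Q t i| ≤ 1 := by
            rw [Int.abs_eq_natAbs]; exact_mod_cast hstep1
          exact_mod_cast this
        simp only [Pi.sub_apply, ha, hb2, Real.norm_eq_abs]
        rw [div_sub_div_same, abs_div, abs_of_pos hsn0]
        gcongr
        · push_cast
          calc |((Q (t+1) i : ℝ) + (m i : ℝ)) - ((Q t i : ℝ) + (m i : ℝ))|
              = |((Q (t+1) i : ℝ)) - ((Q t i : ℝ))| := by ring_nf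
            _ ≤ 1 := by push_cast at this; exact this
      exact (pi_norm_le_iff_of_nonneg (by positivity)).mpr this
    have hba1 : ‖b - a‖ ≤ 1 := hba.trans (by rw [div_le_one hsn0]; exact hsn)
    have := step_bound hN0 hcN hφ hgrad hba1
    have hnorm_a : ‖a‖ = ‖(fun i => ((Q t i : ℤ) : ℝ) + (m i : ℝ))‖ * (1 / Real.sqrt n) := by
      have : a = fun i => (((Q t i : ℤ) : ℝ) + (m i : ℝ)) / Real.sqrt n := by
        funext i
        simp only [ha]
        push_cast
        ring
      rw [this]
      exact norm_div_sqrt _ hsn0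
    have hcoef : (0:ℝ) ≤ cN * 2 ^ N * (1 + ‖a‖) ^ (-N) := by positivity
    calc |φ (fun i => ((Q t i + m i : ℤ) : ℝ) / Real.sqrt n)
          - φ (fun i => ((Q (t+1) i + m i : ℤ) : ℝ) / Real.sqrt n)|
        = |φ b - φ a| := by rw [abs_sub_comm]
      _ ≤ cN * 2 ^ N * (1 + ‖a‖) ^ (-N) * ‖b - a‖ := this
      _ ≤ cN * 2 ^ N * (1 + ‖a‖) ^ (-N) * (1 / Real.sqrt n) :=
          mul_le_mul_of_nonneg_left hba hcoef
      _ = cN * 2 ^ N * (1 / Real.sqrt n)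
          * (1 + ‖(fun i => ((Q t i : ℤ) : ℝ) + (m i : ℝ))‖ * (1 / Real.sqrt n)) ^ (-N) := by
          rw [hnorm_a]; ring
  -- notation for the lattice-sum integrand
  set B : ℕ → (Fin d → ℤ) → ℝ := fun t m =>
    (1 + ‖(fun i => ((Q t i : ℤ) : ℝ) + (m i : ℝ))‖ * (1 / Real.sqrt n)) ^ (-(N * (k:ℝ))) with hB
  have hBnon : ∀ t m, 0 ≤ B t m := fun t m => Real.rpow_nonneg (by positivity) _
  have hGnon : ∀ (t : ℕ) (m : Fin d → ℤ), (0:ℝ) ≤ cN * 2 ^ N * (1 / Real.sqrt n)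
      * (1 + ‖(fun i => ((Q t i : ℤ) : ℝ) + (m i : ℝ))‖ * (1 / Real.sqrt n)) ^ (-N) := by
    intro t m; positivity
  have hGpowB : ∀ (t : ℕ) (m : Fin d → ℤ), (cN * 2 ^ N * (1 / Real.sqrt n)
      * (1 + ‖(fun i => ((Q t i : ℤ) : ℝ) + (m i : ℝ))‖ * (1 / Real.sqrt n)) ^ (-N)) ^ k
      = (cN * 2 ^ N * (1 / Real.sqrt n)) ^ k * B t m := by
    intro t m
    rw [mul_pow, hB]
    congr 1
    rw [← Real.rpow_natCast ((1 + ‖(fun i => ((Q t i : ℤ) : ℝ) + (m i : ℝ))‖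
      * (1 / Real.sqrt n)) ^ (-N)) k, ← Real.rpow_mul (by positivity)]
    congr 1
    ring
  have hper : ∀ m ∈ F,
      |φ (fun i => ((y i + m i : ℤ) : ℝ) / Real.sqrt n)
        - φ (fun i => ((z i + m i : ℤ) : ℝ) / Real.sqrt n)| ^ k
      ≤ (M:ℝ) ^ (k-1) * ((cN * 2 ^ N * (1 / Real.sqrt n)) ^ k
          * ∑ t ∈ Finset.range M, B t m) := by
    intro m _
    set f : ℕ → ℝ := fun t => φ (fun i => ((Q t i + m i : ℤ) : ℝ) / Real.sqrt n) with hf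
    have hf0 : f 0 = φ (fun i => ((y i + m i : ℤ) : ℝ) / Real.sqrt n) := by
      simp only [hf]
      congr 1
      funext i
      rw [hQ, pathP_zero]
    have hfM : f M = φ (fun i => ((z i + m i : ℤ) : ℝ) / Real.sqrt n) := by
      simp only [hf]
      congr 1
      funext i
      rw [hQ, hM, pathP_last]
      simp only [hw]
      push_cast
      ring
    set G : ℕ → ℝ := fun t => cN * 2 ^ N * (1 / Real.sqrt n)
      * (1 + ‖(fun i => ((Q t i : ℤ) : ℝ) + (m i : ℝ))‖ * (1 / Real.sqrt n)) ^ (-N) with hG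
    have habs : |φ (fun i => ((y i + m i : ℤ) : ℝ) / Real.sqrt n)
        - φ (fun i => ((z i + m i : ℤ) : ℝ) / Real.sqrt n)| ≤ ∑ t ∈ Finset.range M, G t := by
      rw [← hf0, ← hfM]
      calc |f 0 - f M| = |∑ t ∈ Finset.range M, (f t - f (t+1))| := by
            rw [Finset.sum_range_sub' f M]
        _ ≤ ∑ t ∈ Finset.range M, |f t - f (t+1)| := Finset.abs_sum_le_sum_abs _ _
        _ ≤ ∑ t ∈ Finset.range M, G t := Finset.sum_le_sum (fun t _ => hstep t m)
    have hsumG : (0:ℝ) ≤ ∑ t ∈ Finset.range M, G t :=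
      Finset.sum_nonneg (fun t _ => hGnon t m)
    have hpow1 : |φ (fun i => ((y i + m i : ℤ) : ℝ) / Real.sqrt n)
        - φ (fun i => ((z i + m i : ℤ) : ℝ) / Real.sqrt n)| ^ k
        ≤ (∑ t ∈ Finset.range M, G t) ^ k :=
      pow_le_pow_left₀ (abs_nonneg _) habs k
    have hpow2 : (∑ t ∈ Finset.range M, G t) ^ k
        ≤ (M:ℝ) ^ (k-1) * ∑ t ∈ Finset.range M, (G t) ^ k := by
      rcases Nat.eq_zero_or_pos M with hM0 | hM0
      · simp [hM0, zero_pow (show k ≠ 0 by omega)]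
      · have hkk : k - 1 + 1 = k := by omega
        have := pow_sum_div_card_le_sum_pow (s := Finset.range M) (f := G)
          (fun t _ => hGnon t m) (k-1)
        rw [hkk, Finset.card_range] at this
        rw [div_le_iff₀ (by positivity : (0:ℝ) < (M:ℝ) ^ (k-1))] at this
        calc (∑ t ∈ Finset.range M, G t) ^ k
            ≤ (∑ t ∈ Finset.range M, G t ^ k) * (M:ℝ) ^ (k-1) := this
          _ = (M:ℝ) ^ (k-1) * ∑ t ∈ Finset.range M, (G t) ^ k := by ring
    refine hpow1.trans (hpow2.trans (le_of_eq ?_))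
    congr 1
    rw [Finset.mul_sum]
    exact Finset.sum_congr rfl (fun t _ => hGpowB t m)
  -- sum over m and apply the lattice-sum bound
  have hC2 : (0:ℝ) ≤ (2 * (1 + 1 / (N * k / d - 1))) ^ d := by
    have : (0:ℝ) < N * k / d - 1 := by
      rw [sub_pos, lt_div_iff₀ (by linarith : (0:ℝ) < (d:ℝ))]
      linarith
    positivity
  have hsum1 : ∑ m ∈ F, |φ (fun i => ((y i + m i : ℤ) : ℝ) / Real.sqrt n)
        - φ (fun i => ((z i + m i : ℤ) : ℝ) / Real.sqrt n)| ^ k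
      ≤ (M:ℝ) ^ (k-1) * ((cN * 2 ^ N * (1 / Real.sqrt n)) ^ k
          * ((M:ℝ) * ((2 * (1 + 1 / (N * k / d - 1))) ^ d * Real.sqrt n ^ d))) := by
    calc ∑ m ∈ F, |φ (fun i => ((y i + m i : ℤ) : ℝ) / Real.sqrt n)
          - φ (fun i => ((z i + m i : ℤ) : ℝ) / Real.sqrt n)| ^ k
        ≤ ∑ m ∈ F, (M:ℝ) ^ (k-1) * ((cN * 2 ^ N * (1 / Real.sqrt n)) ^ k
            * ∑ t ∈ Finset.range M, B t m) := Finset.sum_le_sum hper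
      _ = (M:ℝ) ^ (k-1) * ((cN * 2 ^ N * (1 / Real.sqrt n)) ^ k
            * ∑ t ∈ Finset.range M, ∑ m ∈ F, B t m) := by
          rw [← Finset.mul_sum, ← Finset.mul_sum, Finset.sum_comm]
      _ ≤ (M:ℝ) ^ (k-1) * ((cN * 2 ^ N * (1 / Real.sqrt n)) ^ k
            * ∑ t ∈ Finset.range M, ((2 * (1 + 1 / (N * (k:ℝ) / d - 1))) ^ d * Real.sqrt n ^ d)) := by
          apply mul_le_mul_of_nonneg_left ?_ (pow_nonneg (Nat.cast_nonneg M) _)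
          apply mul_le_mul_of_nonneg_left ?_ (pow_nonneg (by positivity) _)
          apply Finset.sum_le_sum
          intro t _
          exact pi_sum_bound_n hd hNk hn (fun i => ((Q t i : ℤ) : ℝ)) F
      _ = (M:ℝ) ^ (k-1) * ((cN * 2 ^ N * (1 / Real.sqrt n)) ^ k
            * ((M:ℝ) * ((2 * (1 + 1 / (N * k / d - 1))) ^ d * Real.sqrt n ^ d))) := by
          rw [Finset.sum_const, Finset.card_range, nsmul_eq_mul]
  refine hsum1.trans ?_
  -- clean up: M^{k-1} * M = M^k ≤ (d ‖wr‖)^k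
  have hkk : k - 1 + 1 = k := by omega
  have hMk : (M:ℝ) ^ (k-1) * (M:ℝ) = (M:ℝ) ^ k := by
    rw [← pow_succ, hkk]
  have hMle : (M:ℝ) ≤ d * ‖wr‖ := by
    have h1 : (M:ℝ) = ∑ i, (((w i).natAbs : ℕ) : ℝ) := by
      rw [hM]; push_cast; rfl
    have h2 : ∀ i : Fin d, (((w i).natAbs : ℕ) : ℝ) ≤ ‖wr‖ := by
      intro i
      rw [Nat.cast_natAbs]
      have : |wr i| ≤ ‖wr‖ := by
        simpa [Real.norm_eq_abs] using norm_le_pi_norm wr i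
      simpa [hwr, hw] using this
    calc (M:ℝ) = ∑ i, (((w i).natAbs : ℕ) : ℝ) := h1
      _ ≤ ∑ _i : Fin d, ‖wr‖ := Finset.sum_le_sum (fun i _ => h2 i)
      _ = d * ‖wr‖ := by rw [Finset.sum_const, Finset.card_univ]; simp [nsmul_eq_mul]
  have hMk2 : (M:ℝ) ^ k ≤ (d:ℝ) ^ k * ‖wr‖ ^ k := by
    calc (M:ℝ) ^ k ≤ ((d:ℝ) * ‖wr‖) ^ k := pow_le_pow_left₀ (Nat.cast_nonneg M) hMle k
      _ = (d:ℝ) ^ k * ‖wr‖ ^ k := mul_pow _ _ _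
  have hrest : (0:ℝ) ≤ (cN * 2 ^ N * (1 / Real.sqrt n)) ^ k
      * ((2 * (1 + 1 / (N * k / d - 1))) ^ d * Real.sqrt n ^ d) := by
    apply mul_nonneg (by positivity) (mul_nonneg hC2 (by positivity))
  calc (M:ℝ) ^ (k-1) * ((cN * 2 ^ N * (1 / Real.sqrt n)) ^ k
        * ((M:ℝ) * ((2 * (1 + 1 / (N * k / d - 1))) ^ d * Real.sqrt n ^ d)))
      = ((M:ℝ) ^ (k-1) * (M:ℝ)) * ((cN * 2 ^ N * (1 / Real.sqrt n)) ^ k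
        * ((2 * (1 + 1 / (N * k / d - 1))) ^ d * Real.sqrt n ^ d)) := by ring
    _ = (M:ℝ) ^ k * ((cN * 2 ^ N * (1 / Real.sqrt n)) ^ k
        * ((2 * (1 + 1 / (N * k / d - 1))) ^ d * Real.sqrt n ^ d)) := by rw [hMk]
    _ ≤ ((d:ℝ) ^ k * ‖wr‖ ^ k) * ((cN * 2 ^ N * (1 / Real.sqrt n)) ^ k
        * ((2 * (1 + 1 / (N * k / d - 1))) ^ d * Real.sqrt n ^ d)) :=
        mul_le_mul_of_nonneg_right hMk2 hrest
    _ = ((d:ℝ) ^ k * (cN * 2 ^ N) ^ k * (2 * (1 + 1 / (N * k / d - 1))) ^ d)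
        * Real.sqrt n ^ d * (1 / Real.sqrt n) ^ k * ‖wr‖ ^ k := by
        rw [mul_pow (cN * 2 ^ N) (1 / Real.sqrt n) k]
        ring

/-- Mean-value-theorem lattice-sum bound: for `φ` C¹ with
`|∇φ(x)| ≤ c_N (1+|x|)^{−N}`, `N > d + k − 1`, and `ℤ^d`-valued `Y, Z` with
`Y ⊥ (Z − Y)` and `E|Z−Y|^k < ∞`,
`Σ_m E|φ((Y+m)/√n) − φ((Z+m)/√n)|^k ≤ C n^{d/2} n^{−k/2} E|Z−Y|^k`. -/
theorem lattice_increment_bound {Ω : Type*} [MeasurableSpace Ω]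
    (μpr : Measure Ω) [IsProbabilityMeasure μpr]
    (d k : ℕ) (hd : 1 ≤ d) (hk : 1 ≤ k)
    (N cN : ℝ) (hN : (d : ℝ) + k - 1 < N) (hcN : 0 ≤ cN)
    (φ : (Fin d → ℝ) → ℝ) (hφ : ContDiff ℝ 1 φ)
    (hgrad : ∀ x, ‖fderiv ℝ φ x‖ ≤ cN * (1 + ‖x‖) ^ (-N)) :
    ∃ C : ℝ, ∀ n : ℕ, 1 ≤ n → ∀ Y Z : Ω → (Fin d → ℤ),
      Measurable Y → Measurable Z →
      IndepFun Y (fun ω => Z ω - Y ω) μpr →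
      Integrable (fun ω => ‖(fun i => ((Z ω i - Y ω i : ℤ) : ℝ))‖ ^ k) μpr →
      ∑' m : Fin d → ℤ,
          ∫ ω, |φ (fun i => ((Y ω i + m i : ℤ) : ℝ) / Real.sqrt n)
              - φ (fun i => ((Z ω i + m i : ℤ) : ℝ) / Real.sqrt n)| ^ k ∂μpr
        ≤ C * (n : ℝ) ^ ((d : ℝ) / 2) * (n : ℝ) ^ (-(k : ℝ) / 2) *
            ∫ ω, ‖(fun i => ((Z ω i - Y ω i : ℤ) : ℝ))‖ ^ k ∂μpr := by
  have hd' : (1:ℝ) ≤ d := by exact_mod_cast hd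
  have hk' : (1:ℝ) ≤ k := by exact_mod_cast hk
  have hNkd : (0:ℝ) < N * k / d - 1 := by
    rw [sub_pos, lt_div_iff₀ (by linarith : (0:ℝ) < (d:ℝ))]
    nlinarith
  set C : ℝ := (d:ℝ) ^ k * (cN * 2 ^ N) ^ k * (2 * (1 + 1 / (N * k / d - 1))) ^ d with hC
  have hC0 : 0 ≤ C := by positivity
  refine ⟨C, ?_⟩
  intro n hn Y Z hY hZ _hindep hint
  have hn0 : (0:ℝ) ≤ n := Nat.cast_nonneg n
  have hsn : (1:ℝ) ≤ Real.sqrt n := by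
    rw [show (1:ℝ) = Real.sqrt 1 from (Real.sqrt_one).symm]
    exact Real.sqrt_le_sqrt (by exact_mod_cast hn)
  have hsn0 : (0:ℝ) < Real.sqrt n := by linarith
  -- power bookkeeping
  have hpow_d : Real.sqrt n ^ d = (n:ℝ) ^ ((d:ℝ) / 2) := by
    rw [Real.sqrt_eq_rpow, ← Real.rpow_natCast ((n:ℝ) ^ ((1:ℝ)/2)) d,
      ← Real.rpow_mul hn0]
    congr 1
    ring
  have hpow_k : (1 / Real.sqrt n) ^ k = (n:ℝ) ^ (-(k : ℝ) / 2) := by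
    rw [Real.sqrt_eq_rpow, one_div, ← Real.rpow_neg hn0,
      ← Real.rpow_natCast ((n:ℝ) ^ (-((1:ℝ)/2))) k, ← Real.rpow_mul hn0]
    congr 1
    ring
  set wnorm : Ω → ℝ := fun ω => ‖(fun i => ((Z ω i - Y ω i : ℤ) : ℝ))‖ ^ k with hwnorm
  have hwnn : ∀ ω, 0 ≤ wnorm ω := fun ω => by positivity
  have hintw : 0 ≤ ∫ ω, wnorm ω ∂μpr := integral_nonneg hwnn
  set Cn : ℝ := C * Real.sqrt n ^ d * (1 / Real.sqrt n) ^ k with hCn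
  have hCn0 : 0 ≤ Cn := by positivity
  -- measurability of each summand
  have hmeas : ∀ m : Fin d → ℤ, Measurable (fun ω =>
      |φ (fun i => ((Y ω i + m i : ℤ) : ℝ) / Real.sqrt n)
        - φ (fun i => ((Z ω i + m i : ℤ) : ℝ) / Real.sqrt n)| ^ k) := by
    intro m
    have h1 : ∀ (W : Ω → (Fin d → ℤ)), Measurable W → Measurable (fun ω =>
        φ (fun i => ((W ω i + m i : ℤ) : ℝ) / Real.sqrt n)) := by
      intro W hW
      apply (hφ.continuous.measurable).comp
      apply measurable_pi_lambda
      intro i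
      exact (measurable_from_top (f := fun v : ℤ => ((v + m i : ℤ) : ℝ) / Real.sqrt n)).comp
        ((measurable_pi_apply i).comp hW)
    exact (((h1 Y hY).sub (h1 Z hZ)).abs).pow_const k
  -- pointwise finite-sum bound
  have hkey : ∀ (F : Finset (Fin d → ℤ)) (ω : Ω),
      ∑ m ∈ F, |φ (fun i => ((Y ω i + m i : ℤ) : ℝ) / Real.sqrt n)
        - φ (fun i => ((Z ω i + m i : ℤ) : ℝ) / Real.sqrt n)| ^ k ≤ Cn * wnorm ω := by
    intro F ω
    have := key_pointwise hd hk hN hcN hφ hgrad hn (Y ω) (Z ω) F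
    calc ∑ m ∈ F, |φ (fun i => ((Y ω i + m i : ℤ) : ℝ) / Real.sqrt n)
          - φ (fun i => ((Z ω i + m i : ℤ) : ℝ) / Real.sqrt n)| ^ k
        ≤ ((d:ℝ) ^ k * (cN * 2 ^ N) ^ k * (2 * (1 + 1 / (N * k / d - 1))) ^ d)
          * Real.sqrt n ^ d * (1 / Real.sqrt n) ^ k
          * ‖(fun i => ((Z ω i - Y ω i : ℤ) : ℝ))‖ ^ k := this
      _ = Cn * wnorm ω := by rw [hCn, hC, hwnorm]
  -- integrability of each summand
  have hintm : ∀ m : Fin d → ℤ, Integrable (fun ω =>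
      |φ (fun i => ((Y ω i + m i : ℤ) : ℝ) / Real.sqrt n)
        - φ (fun i => ((Z ω i + m i : ℤ) : ℝ) / Real.sqrt n)| ^ k) μpr := by
    intro m
    apply Integrable.mono' (hint.const_mul Cn) (hmeas m).aestronglyMeasurable
    filter_upwards with ω
    rw [Real.norm_eq_abs, abs_of_nonneg (by positivity)]
    have := hkey {m} ω
    simpa using this
  -- conclude
  have hrhs : C * (n : ℝ) ^ ((d : ℝ) / 2) * (n : ℝ) ^ (-(k : ℝ) / 2) *
      ∫ ω, wnorm ω ∂μpr = Cn * ∫ ω, wnorm ω ∂μpr := by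
    rw [hCn, hpow_d, hpow_k]
  rw [show (∫ ω, ‖(fun i => ((Z ω i - Y ω i : ℤ) : ℝ))‖ ^ k ∂μpr) = ∫ ω, wnorm ω ∂μpr from rfl,
    hrhs]
  apply tsum_le_of_sum_le' (by positivity)
  intro F
  rw [← integral_finset_sum F (fun m _ => hintm m)]
  calc ∫ ω, ∑ m ∈ F, |φ (fun i => ((Y ω i + m i : ℤ) : ℝ) / Real.sqrt n)
        - φ (fun i => ((Z ω i + m i : ℤ) : ℝ) / Real.sqrt n)| ^ k ∂μpr
      ≤ ∫ ω, Cn * wnorm ω ∂μpr :=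
        integral_mono (integrable_finset_sum F (fun m _ => hintm m)) (hint.const_mul Cn)
          (fun ω => hkey F ω)
    _ = Cn * ∫ ω, wnorm ω ∂μpr := integral_const_mul _ _
end
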